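/- arXiv:2605.08587 — 3 statements merged into one kernel-verified Lean document; each statement's English description precedes it below -/
import Mathlib

section
/- Let S̃ ∈ ℝ^{d_k×d_v}, k ∈ ℝ^{d_k}, v ∈ ℝ^{d_v}, e = v - S̃ᵀk, η ∈ (0,1], ε ≥ 0 with (1-η)‖k‖² + ε > 0, and set μ = η/((1-η)‖k‖² + ε). Then the unique minimizer over S ∈ ℝ^{d_k×d_v} of J(S) = (1/2)‖S - S̃‖_F² + (μ/2)‖Sᵀk - v‖² is S* = S̃ + (η/(‖k‖² + ε)) k eᵀ. -/
open Matrix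

/-! The objective is quadratic, so expanding `J (S₀ + D)` is exact:
`J (S₀ + D) = J S₀ + ½‖D‖_F² + (μ/2)‖Dᵀk‖² + ⟨D, ∇J(S₀)⟩_F` with
`∇J(S₀) = (S₀ - S̃) + μ k (S₀ᵀk - v)ᵀ`. For `μ ≥ 0` a stationary point is therefore the strict
global minimizer. At `S* = S̃ + c k eᵀ`, `c = η/(‖k‖² + ε)`, the residual is `S*ᵀk - v = (c‖k‖² - 1) e`,
so `∇J(S*) = (c + μ (c‖k‖² - 1)) k eᵀ`, and the choice of `μ` makes this coefficient vanish. -/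

section ProximalObjective

variable {m n : Type*} [Fintype m] [Fintype n]

lemma sum_add_sq (f g : n → ℝ) :
    ∑ j, (f j + g j) ^ 2 = ∑ j, f j ^ 2 + 2 * ∑ j, f j * g j + ∑ j, g j ^ 2 := by
  simp only [add_sq, Finset.sum_add_distrib, Finset.mul_sum, mul_assoc]

lemma sum_mul_transpose_mulVec (D : Matrix m n ℝ) (k : m → ℝ) (r : n → ℝ) :
    ∑ j, r j * (Dᵀ *ᵥ k) j = ∑ i, ∑ j, D i j * vecMulVec k r i j := by
  simp only [mulVec, dotProduct, transpose_apply, vecMulVec_apply, Finset.mul_sum]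
  rw [Finset.sum_comm]
  exact Finset.sum_congr rfl fun i _ => Finset.sum_congr rfl fun j _ => by ring

lemma sum_sum_sq_pos {D : Matrix m n ℝ} (hD : D ≠ 0) : 0 < ∑ i, ∑ j, D i j ^ 2 := by
  obtain ⟨i, j, hij⟩ : ∃ i j, D i j ≠ 0 := by
    by_contra! h
    exact hD (ext h)
  refine Finset.sum_pos' (fun i _ => Finset.sum_nonneg fun j _ => sq_nonneg _)
    ⟨i, Finset.mem_univ _, ?_⟩
  exact Finset.sum_pos' (fun j _ => sq_nonneg _) ⟨j, Finset.mem_univ _, by positivity⟩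

noncomputable def proxObjective (St : Matrix m n ℝ) (k : m → ℝ) (v : n → ℝ) (μ : ℝ)
    (S : Matrix m n ℝ) : ℝ :=
  (1 / 2) * (∑ i, ∑ j, (S - St) i j ^ 2) + (μ / 2) * ∑ j, (Sᵀ *ᵥ k - v) j ^ 2

lemma proxObjective_add (St S D : Matrix m n ℝ) (k : m → ℝ) (v : n → ℝ) (μ : ℝ) :
    proxObjective St k v μ (S + D) = proxObjective St k v μ S + (1 / 2) * ∑ i, ∑ j, D i j ^ 2
      + (μ / 2) * ∑ j, (Dᵀ *ᵥ k) j ^ 2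
      + ∑ i, ∑ j, D i j * (S - St + μ • vecMulVec k (Sᵀ *ᵥ k - v)) i j := by
  have hdev : S + D - St = (S - St) + D := by abel
  have hres : (S + D)ᵀ *ᵥ k - v = (Sᵀ *ᵥ k - v) + Dᵀ *ᵥ k := by
    rw [transpose_add, add_mulVec]
    abel
  have hgrad : ∑ i, ∑ j, D i j * (S - St + μ • vecMulVec k (Sᵀ *ᵥ k - v)) i j
      = ∑ i, ∑ j, (S - St) i j * D i j + μ * ∑ j, (Sᵀ *ᵥ k - v) j * (Dᵀ *ᵥ k) j := by
    rw [sum_mul_transpose_mulVec, Finset.mul_sum, ← Finset.sum_add_distrib]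
    refine Finset.sum_congr rfl fun i _ => ?_
    rw [Finset.mul_sum, ← Finset.sum_add_distrib]
    refine Finset.sum_congr rfl fun j _ => ?_
    simp only [Matrix.add_apply, Matrix.smul_apply, smul_eq_mul]
    ring
  simp_rw [proxObjective, hdev, hres, hgrad, Matrix.add_apply, Pi.add_apply, sum_add_sq,
    Finset.sum_add_distrib, ← Finset.mul_sum]
  ring

theorem proxObjective_lt_of_stationary {St S₀ : Matrix m n ℝ} {k : m → ℝ} {v : n → ℝ} {μ : ℝ}
    (hμ : 0 ≤ μ) (hS₀ : S₀ - St + μ • vecMulVec k (S₀ᵀ *ᵥ k - v) = 0) {S : Matrix m n ℝ}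
    (hS : S ≠ S₀) : proxObjective St k v μ S₀ < proxObjective St k v μ S := by
  have hD : S - S₀ ≠ 0 := sub_ne_zero.mpr hS
  have hexp := proxObjective_add St S₀ (S - S₀) k v μ
  rw [add_sub_cancel, hS₀] at hexp
  simp only [Matrix.zero_apply, mul_zero, Finset.sum_const_zero, add_zero] at hexp
  have hres : 0 ≤ ∑ j, ((S - S₀)ᵀ *ᵥ k) j ^ 2 := Finset.sum_nonneg fun j _ => sq_nonneg _
  nlinarith [sum_sum_sq_pos hD]

end ProximalObjective

lemma transpose_add_smul_vecMulVec_mulVec_sub {m n : Type*} [Fintype m]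
    (St : Matrix m n ℝ) (k : m → ℝ) (v : n → ℝ) (c : ℝ) :
    (St + c • vecMulVec k (v - Stᵀ *ᵥ k))ᵀ *ᵥ k - v
      = (c * ∑ i, k i ^ 2 - 1) • (v - Stᵀ *ᵥ k) := by
  have hkk : k ⬝ᵥ k = ∑ i, k i ^ 2 := by simp only [dotProduct, sq]
  rw [transpose_add, transpose_smul, transpose_vecMulVec, add_mulVec, smul_mulVec,
    vecMulVec_mulVec, op_smul_eq_smul, smul_smul, hkk]
  module

lemma kla_stationarity_coeff_eq_zero {K ε η : ℝ} (h₁ : K + ε ≠ 0) (h₂ : (1 - η) * K + ε ≠ 0) :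
    η / (K + ε) + η / ((1 - η) * K + ε) * (η / (K + ε) * K - 1) = 0 := by
  have hres : η / (K + ε) * K - 1 = -((1 - η) * K + ε) / (K + ε) := by field_simp; ring
  rw [hres, div_mul_div_comm, mul_neg, neg_div, mul_comm η, mul_div_mul_left _ _ h₂,
    add_neg_cancel]

theorem kla_proximal_form_general {dk dv : ℕ}
    (St : Matrix (Fin dk) (Fin dv) ℝ) (k : Fin dk → ℝ) (v : Fin dv → ℝ)
    (e : Fin dv → ℝ) (he : e = v - Stᵀ.mulVec k)
    (η ε : ℝ) (hη0 : 0 < η)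
    (hpos : (1 - η) * (∑ i, k i ^ 2) + ε > 0)
    (μ : ℝ) (hμ : μ = η / ((1 - η) * (∑ i, k i ^ 2) + ε))
    (J : Matrix (Fin dk) (Fin dv) ℝ → ℝ)
    (hJ : ∀ S, J S = (1 / 2) * (∑ i, ∑ j, (S - St) i j ^ 2)
        + (μ / 2) * ∑ j, (Sᵀ.mulVec k - v) j ^ 2)
    (Sstar : Matrix (Fin dk) (Fin dv) ℝ)
    (hS : Sstar = St + (η / ((∑ i, k i ^ 2) + ε)) • vecMulVec k e) :
    ∀ S : Matrix (Fin dk) (Fin dv) ℝ, S ≠ Sstar → J Sstar < J S := by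
  intro S hne
  have hJ' : J = proxObjective St k v μ := funext hJ
  have hK : 0 ≤ ∑ i, k i ^ 2 := Finset.sum_nonneg fun i _ => sq_nonneg _
  have hKε : 0 < ∑ i, k i ^ 2 + ε := by nlinarith
  have hstat : Sstar - St + μ • vecMulVec k (Sstarᵀ *ᵥ k - v) = 0 := by
    subst he hS hμ
    rw [transpose_add_smul_vecMulVec_mulVec_sub, vecMulVec_smul, add_sub_cancel_left, smul_smul,
      ← add_smul, kla_stationarity_coeff_eq_zero hKε.ne' hpos.ne', zero_smul]
  rw [hJ']
  exact proxObjective_lt_of_stationary (hμ ▸ div_nonneg hη0.le hpos.le) hstat hne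

/-- Exact proximal form of the relaxed Kaczmarz (KLA) update: with
`μ = η/((1-η)‖k‖² + ε)`, the unique minimizer of
`J(S) = (1/2)‖S - S̃‖_F² + (μ/2)‖Sᵀk - v‖²` is `S̃ + (η/(‖k‖²+ε)) k eᵀ`. -/
theorem kla_proximal_form {dk dv : ℕ}
    (St : Matrix (Fin dk) (Fin dv) ℝ) (k : Fin dk → ℝ) (v : Fin dv → ℝ)
    (e : Fin dv → ℝ) (he : e = v - Stᵀ.mulVec k)
    (η ε : ℝ) (hη0 : 0 < η) (hη1 : η ≤ 1) (hε : 0 ≤ ε)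
    (hpos : (1 - η) * (∑ i, k i ^ 2) + ε > 0)
    (μ : ℝ) (hμ : μ = η / ((1 - η) * (∑ i, k i ^ 2) + ε))
    (J : Matrix (Fin dk) (Fin dv) ℝ → ℝ)
    (hJ : ∀ S, J S = (1 / 2) * (∑ i, ∑ j, (S - St) i j ^ 2)
        + (μ / 2) * ∑ j, (Sᵀ.mulVec k - v) j ^ 2)
    (Sstar : Matrix (Fin dk) (Fin dv) ℝ)
    (hS : Sstar = St + (η / ((∑ i, k i ^ 2) + ε)) • vecMulVec k e) :
    ∀ S : Matrix (Fin dk) (Fin dv) ℝ, S ≠ Sstar → J Sstar < J S :=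
  kla_proximal_form_general St k v e he η ε hη0 hpos μ hμ J hJ Sstar hS
end

section
/- With the same data k_r, v_r, α_r, β_r as in the WY setup, define H_i ∈ ℝ^{d_v×d_k} by the recurrence H₀ = 0, H_i = α_i (H_{i-1} - β_i (H_{i-1} k_i) k_iᵀ) + β_i v_i k_iᵀ. Define u₁,…,u_C ∈ ℝ^{d_v} by u_i = β_i( v_i - Σ_{r=1}^{i-1} u_r (k_rᵀ (∏_{s=r+1}^{i} α_s) k_i) ). Then H_i = Σ_{r=1}^{i} (∏_{s=r+1}^{i} α_s) u_r k_rᵀ for every 1 ≤ i ≤ C. -/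
open Matrix

private lemma vmv_smul {dk dv : ℕ} (c : ℝ) (u : Fin dv → ℝ) (kk : Fin dk → ℝ) :
    vecMulVec (c • u) kk = c • vecMulVec u kk := by
  ext a b; simp [vecMulVec_apply, mul_assoc]

private lemma vmv_sub {dk dv : ℕ} (u w : Fin dv → ℝ) (kk : Fin dk → ℝ) :
    vecMulVec (u - w) kk = vecMulVec u kk - vecMulVec w kk := by
  ext a b; simp [vecMulVec_apply, sub_mul]

private lemma vmv_sum {dk dv : ℕ} {ι : Type*} (s : Finset ι) (f : ι → Fin dv → ℝ)
    (kk : Fin dk → ℝ) :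
    vecMulVec (∑ r ∈ s, f r) kk = ∑ r ∈ s, vecMulVec (f r) kk := by
  ext a b; simp [vecMulVec_apply, Finset.sum_mul, Matrix.sum_apply]

private lemma vmv_mulVec {dk dv : ℕ} (u : Fin dv → ℝ) (kk x : Fin dk → ℝ) :
    (vecMulVec u kk).mulVec x = (kk ⬝ᵥ x) • u := by
  ext a
  simp [mulVec, dotProduct, vecMulVec_apply, Finset.mul_sum, mul_assoc, mul_comm,
    mul_left_comm]

private lemma sum_mulVec' {dk dv : ℕ} {ι : Type*} (s : Finset ι)
    (M : ι → Matrix (Fin dv) (Fin dk) ℝ) (x : Fin dk → ℝ) :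
    (∑ r ∈ s, M r).mulVec x = ∑ r ∈ s, (M r).mulVec x := by
  ext a
  simp [mulVec, dotProduct, Matrix.sum_apply, Finset.sum_mul]
  rw [Finset.sum_comm]

/-- WY representation of the accumulated write term of the chunkwise
delta-rule recurrence `H_i = α_i (H_{i-1} - β_i (H_{i-1} k_i) k_iᵀ) + β_i v_i k_iᵀ`
with `H₀ = 0`: `H_i = Σ_{r=1}^{i} (∏_{s=r+1}^{i} α_s) u_r k_rᵀ`. -/
theorem wy_representation_H {C dk dv : ℕ}
    (α β : ℕ → ℝ) (k : ℕ → Fin dk → ℝ) (v : ℕ → Fin dv → ℝ)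
    (H : ℕ → Matrix (Fin dv) (Fin dk) ℝ)
    (hH0 : H 0 = 0)
    (hH : ∀ i, H (i + 1) =
      α (i + 1) • (H i - β (i + 1) • vecMulVec ((H i).mulVec (k (i + 1))) (k (i + 1)))
        + β (i + 1) • vecMulVec (v (i + 1)) (k (i + 1)))
    (u : ℕ → Fin dv → ℝ)
    (hu : ∀ i, 1 ≤ i → i ≤ C →
      u i = β i • (v i
        - ∑ r ∈ Finset.Icc 1 (i - 1),
            (k r ⬝ᵥ ((∏ s ∈ Finset.Icc (r + 1) i, α s) • k i)) • u r)) :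
    ∀ i, 1 ≤ i → i ≤ C →
      H i = ∑ r ∈ Finset.Icc 1 i,
        (∏ s ∈ Finset.Icc (r + 1) i, α s) • vecMulVec (u r) (k r) := by
  intro i
  induction i with
  | zero => omega
  | succ n ih =>
    intro _ hle
    rcases Nat.eq_zero_or_pos n with hn | hn
    · -- base case i = 1
      subst hn
      have hu1 : u 1 = β 1 • v 1 := by
        have := hu 1 le_rfl (by omega)
        simpa using this
      rw [hH 0, hH0]
      have hz : vecMulVec (0 : Fin dv → ℝ) (k 1) = 0 := by
        ext a b; simp [vecMulVec_apply]
      simp [hu1, vmv_smul, Finset.Icc_self, hz,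
        show Finset.Icc 2 1 = (∅ : Finset ℕ) from Finset.Icc_eq_empty (by omega)]
    · -- inductive step, n ≥ 1
      have hIH := ih hn (by omega)
      set α' := α (n + 1)
      set β' := β (n + 1)
      set k' := k (n + 1)
      set v' := v (n + 1)
      -- value of H n *ᵥ k'
      have hw : (H n).mulVec k'
          = ∑ r ∈ Finset.Icc 1 n,
              (∏ s ∈ Finset.Icc (r + 1) n, α s) • ((k r ⬝ᵥ k') • u r) := by
        rw [hIH, sum_mulVec']
        refine Finset.sum_congr rfl fun r _ => ?_
        rw [smul_mulVec, vmv_mulVec]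
      -- u (n+1)
      have hu' : u (n + 1)
          = β' • v' - (α' * β') •
              ∑ r ∈ Finset.Icc 1 n, (∏ s ∈ Finset.Icc (r + 1) n, α s) •
                ((k r ⬝ᵥ k') • u r) := by
        have h := hu (n + 1) (by omega) hle
        rw [h]
        rw [smul_sub]
        congr 1
        rw [Nat.add_sub_cancel, Finset.smul_sum, Finset.smul_sum]
        refine Finset.sum_congr rfl fun r hr => ?_
        have hrn : r ≤ n := (Finset.mem_Icc.mp hr).2
        have hprod : (∏ s ∈ Finset.Icc (r + 1) (n + 1), α s)
            = (∏ s ∈ Finset.Icc (r + 1) n, α s) * α' := by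
          rw [Finset.prod_Icc_succ_top (by omega : r + 1 ≤ n + 1)]
        ext a
        simp only [Pi.smul_apply, smul_eq_mul, dotProduct_smul, hprod]
        ring
      -- prod split for the target sum
      have hsplit : ∀ r ∈ Finset.Icc 1 n,
          (∏ s ∈ Finset.Icc (r + 1) (n + 1), α s)
            = α' * (∏ s ∈ Finset.Icc (r + 1) n, α s) := by
        intro r hr
        have hrn : r ≤ n := (Finset.mem_Icc.mp hr).2
        rw [Finset.prod_Icc_succ_top (by omega : r + 1 ≤ n + 1), mul_comm]
      rw [Finset.sum_Icc_succ_top (by omega : 1 ≤ n + 1)]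
      rw [Finset.sum_congr rfl (fun r hr => by rw [hsplit r hr])]
      have hlast : (∏ s ∈ Finset.Icc (n + 1 + 1) (n + 1), α s) = 1 := by
        rw [Finset.Icc_eq_empty (by omega), Finset.prod_empty]
      rw [hlast, one_smul]
      have hsum : (∑ r ∈ Finset.Icc 1 n,
            (α' * (∏ s ∈ Finset.Icc (r + 1) n, α s)) • vecMulVec (u r) (k r))
          = α' • H n := by
        rw [hIH, Finset.smul_sum]
        exact Finset.sum_congr rfl fun r _ => (smul_smul _ _ _).symm
      have key2 : vecMulVec (u (n + 1)) k'
          = β' • vecMulVec v' k' - (α' * β') • vecMulVec ((H n).mulVec k') k' := by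
        rw [hu', vmv_sub, vmv_smul, vmv_smul, ← hw]
      rw [hsum, key2, hH n]
      module
end

section
/- Let R₀ ∈ ℝ^{d_v×d_k} and define R_i by the recurrence R_i = α_i R_{i-1}(I - β_i k_i k_iᵀ) + β_i v_i k_iᵀ for i = 1,…,C. Then there exist vectors û₁,…,û_C ∈ ℝ^{d_v} such that R_i = (∏_{r=1}^{i} α_r) R₀ + Σ_{r=1}^{i} (∏_{s=r+1}^{i} α_s) û_r k_rᵀ for all i; moreover û_r = u_r - R₀ w_r where u_r and w_r are given by the WY recurrences u_i = β_i(v_i - Σ_{r<i} u_r k_rᵀ(∏_{s=r+1}^{i}α_s)k_i) and w_i = β_i((∏_{s=1}^{i}α_s) k_i - Σ_{r<i} w_r k_rᵀ(∏_{s=r+1}^{i}α_s)k_i). -/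
/-!
One delta-rule step is a decay followed by a rank-one write,
`R ↦ α R + (β (v - α R k)) kᵀ`, and the WY sum `S_i` obeys the same kind of step,
`S_{i+1} = α_{i+1} S_i + û_{i+1} k_{i+1}ᵀ`. Hence `R_i = S_i` by induction once
`û_{i+1} = β_{i+1} (v_{i+1} - α_{i+1} S_i k_{i+1})`; expanding `S_i k_{i+1}` shows that this
is exactly the combination `u - R₀ w` of the two WY recurrences.
-/

open Matrix Finset

section

variable {K : Type*} [CommRing K] {m n : Type*}

theorem mul_one_sub_smul_vecMulVec [Fintype n] [DecidableEq n] (M : Matrix m n K) (b : K)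
    (x y : n → K) :
    M * (1 - b • vecMulVec x y) = M - vecMulVec (b • M *ᵥ x) y := by
  rw [Matrix.mul_sub, Matrix.mul_one, Matrix.mul_smul, mul_vecMulVec, smul_vecMulVec]

theorem deltaRule_eq_smul_add_vecMulVec [Fintype n] [DecidableEq n] (M : Matrix m n K)
    (a b : K) (x : n → K) (y : m → K) :
    a • (M * (1 - b • vecMulVec x x)) + b • vecMulVec y x
      = a • M + vecMulVec (b • (y - a • M *ᵥ x)) x := by
  simp only [mul_one_sub_smul_vecMulVec, smul_vecMulVec, sub_vecMulVec]
  module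

def wyState (α : ℕ → K) (R₀ : Matrix m n K) (uhat : ℕ → m → K) (k : ℕ → n → K) (i : ℕ) :
    Matrix m n K :=
  (∏ r ∈ Icc 1 i, α r) • R₀
    + ∑ r ∈ Icc 1 i, (∏ s ∈ Icc (r + 1) i, α s) • vecMulVec (uhat r) (k r)

variable (α : ℕ → K) (R₀ : Matrix m n K) (uhat : ℕ → m → K) (k : ℕ → n → K)

@[simp]
theorem wyState_zero : wyState α R₀ uhat k 0 = R₀ := by
  simp [wyState]

theorem wyState_succ (i : ℕ) :
    wyState α R₀ uhat k (i + 1)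
      = α (i + 1) • wyState α R₀ uhat k i + vecMulVec (uhat (i + 1)) (k (i + 1)) := by
  have hdecay : ∀ r ∈ Icc 1 i, (∏ s ∈ Icc (r + 1) (i + 1), α s) • vecMulVec (uhat r) (k r)
      = α (i + 1) • (∏ s ∈ Icc (r + 1) i, α s) • vecMulVec (uhat r) (k r) := fun r hr => by
    rw [prod_Icc_succ_top (by simp at hr; omega), smul_smul, mul_comm]
  rw [wyState, wyState, sum_Icc_succ_top (by omega), prod_Icc_succ_top (by omega),
    Icc_eq_empty_of_lt (Nat.lt_succ_self (i + 1)), prod_empty, one_smul, sum_congr rfl hdecay,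
    smul_add, smul_sum, mul_comm, smul_smul, add_assoc]

theorem smul_wyState_mulVec [Fintype n] (i : ℕ) (x : n → K) :
    α (i + 1) • wyState α R₀ uhat k i *ᵥ x
      = (∏ r ∈ Icc 1 (i + 1), α r) • R₀ *ᵥ x
        + ∑ r ∈ Icc 1 i, (k r ⬝ᵥ ((∏ s ∈ Icc (r + 1) (i + 1), α s) • x)) • uhat r := by
  have hdecay : ∀ r ∈ Icc 1 i,
      α (i + 1) • ((∏ s ∈ Icc (r + 1) i, α s) • vecMulVec (uhat r) (k r)) *ᵥ x
        = (k r ⬝ᵥ ((∏ s ∈ Icc (r + 1) (i + 1), α s) • x)) • uhat r := fun r hr => by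
    rw [prod_Icc_succ_top (by simp at hr; omega), smul_mulVec, vecMulVec_mulVec,
      op_smul_eq_smul, dotProduct_smul, smul_smul, smul_smul, smul_eq_mul]
    ring_nf
  rw [wyState, add_mulVec, smul_add, sum_mulVec, smul_sum, sum_congr rfl hdecay, smul_mulVec,
    smul_smul, prod_Icc_succ_top (by omega), mul_comm]

theorem sub_mulVec_eq_smul_sub_smul_wyState_mulVec [Fintype n] (β : ℕ → K) (v u : ℕ → m → K)
    (w : ℕ → n → K) (i : ℕ)
    (hu : u (i + 1) = β (i + 1) • (v (i + 1)
      - ∑ r ∈ Icc 1 i, (k r ⬝ᵥ ((∏ s ∈ Icc (r + 1) (i + 1), α s) • k (i + 1))) • u r))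
    (hw : w (i + 1) = β (i + 1) • ((∏ s ∈ Icc 1 (i + 1), α s) • k (i + 1)
      - ∑ r ∈ Icc 1 i, (k r ⬝ᵥ ((∏ s ∈ Icc (r + 1) (i + 1), α s) • k (i + 1))) • w r)) :
    u (i + 1) - R₀ *ᵥ w (i + 1) = β (i + 1) • (v (i + 1)
      - α (i + 1) • wyState α R₀ (fun r => u r - R₀ *ᵥ w r) k i *ᵥ k (i + 1)) := by
  rw [smul_wyState_mulVec, hu, hw, mulVec_smul, mulVec_sub, mulVec_sum]
  simp only [mulVec_smul, smul_sub, sum_sub_distrib]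
  module

end

/-- Combined WY representation of the transposed delta-rule state recurrence
`R_i = α_i R_{i-1}(I - β_i k_i k_iᵀ) + β_i v_i k_iᵀ`: there exist vectors
`û_r` with `R_i = (∏_{r≤i} α_r) R₀ + Σ_{r≤i} (∏_{s=r+1}^{i} α_s) û_r k_rᵀ`,
and `û_r = u_r - R₀ w_r` for the WY auxiliary vectors `u_r`, `w_r`. -/
theorem combined_wy_representation {C dk dv : ℕ}
    (α β : ℕ → ℝ) (k : ℕ → Fin dk → ℝ) (v : ℕ → Fin dv → ℝ)
    (R : ℕ → Matrix (Fin dv) (Fin dk) ℝ)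
    (hR : ∀ i, R (i + 1) =
      α (i + 1) • (R i * ((1 : Matrix (Fin dk) (Fin dk) ℝ)
          - β (i + 1) • vecMulVec (k (i + 1)) (k (i + 1))))
        + β (i + 1) • vecMulVec (v (i + 1)) (k (i + 1)))
    (u : ℕ → Fin dv → ℝ)
    (hu : ∀ i, 1 ≤ i → i ≤ C →
      u i = β i • (v i
        - ∑ r ∈ Finset.Icc 1 (i - 1),
            (k r ⬝ᵥ ((∏ s ∈ Finset.Icc (r + 1) i, α s) • k i)) • u r))
    (w : ℕ → Fin dk → ℝ)
    (hw : ∀ i, 1 ≤ i → i ≤ C →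
      w i = β i • ((∏ s ∈ Finset.Icc 1 i, α s) • k i
        - ∑ r ∈ Finset.Icc 1 (i - 1),
            (k r ⬝ᵥ ((∏ s ∈ Finset.Icc (r + 1) i, α s) • k i)) • w r)) :
    ∃ uhat : ℕ → Fin dv → ℝ,
      (∀ i, i ≤ C →
        R i = (∏ r ∈ Finset.Icc 1 i, α r) • R 0
          + ∑ r ∈ Finset.Icc 1 i,
              (∏ s ∈ Finset.Icc (r + 1) i, α s) • vecMulVec (uhat r) (k r)) ∧
      (∀ r, 1 ≤ r → r ≤ C → uhat r = u r - (R 0).mulVec (w r)) := by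
  refine ⟨fun r => u r - R 0 *ᵥ w r, fun i hi => ?_, fun _ _ _ => rfl⟩
  change R i = wyState α (R 0) (fun r => u r - R 0 *ᵥ w r) k i
  induction i with
  | zero => simp
  | succ i ih =>
    have hu' := hu (i + 1) (by omega) hi
    have hw' := hw (i + 1) (by omega) hi
    rw [Nat.add_sub_cancel] at hu' hw'
    rw [hR, ih (by omega), deltaRule_eq_smul_add_vecMulVec,
      ← sub_mulVec_eq_smul_sub_smul_wyState_mulVec α (R 0) k β v u w i hu' hw', wyState_succ]
end
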